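/- arXiv:1604.02557 — 3 statements merged into one kernel-verified Lean document; each statement's English description precedes it below -/
import Mathlib

section
/- Let n = 2^k with k ≥ 1 and let F be the n×n Walsh–Hadamard matrix. Then the quasi-entropy of F equals n·log₂ n, i.e. Φ(F) = n log₂ n. -/
open Matrix Finset

noncomputable section

/-- Walsh–Hadamard matrix of size `2^k`. -/
def WH (k : ℕ) : Matrix (Fin (2^k)) (Fin (2^k)) ℝ := fun i j =>
  ((-1 : ℝ) ^ (∑ b ∈ Finset.range k, ((i.val >>> b) % 2) * ((j.val >>> b) % 2))) /
    Real.sqrt (2^k)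

/-- Quasi-entropy `Φ(M)` (base-2 logs, `0·log 0 = 0`). -/
def qent {n : ℕ} (M : Matrix (Fin n) (Fin n) ℝ) : ℝ :=
  -∑ i, ∑ j, (M i j * M⁻¹ᵀ i j) * Real.logb 2 |M i j * M⁻¹ᵀ i j|

/-- Preconditioned quasi-entropy `Φ_{A,B}(M)`. -/
def qentP {n : ℕ} (A B M : Matrix (Fin n) (Fin n) ℝ) : ℝ :=
  -∑ i, ∑ j, ((M * A) i j * (M⁻¹ᵀ * B) i j) * Real.logb 2 |(M * A) i j * (M⁻¹ᵀ * B) i j|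

/-- Summand of the paired potential. -/
def pairS {n : ℕ} (P Q : Matrix (Fin n) (Fin n ⊕ Fin n) ℝ)
    (M : Matrix (Fin n) (Fin n) ℝ) (i j : Fin n) : ℝ :=
  (M * P) i (Sum.inl j) * (M⁻¹ᵀ * Q) i (Sum.inl j) +
    (M * P) i (Sum.inr j) * (M⁻¹ᵀ * Q) i (Sum.inr j)

/-- Paired potential `Φ̂_{P,Q}(M)` for preconditioners `P Q : n × 2n`. -/
def pairedPot {n : ℕ} (P Q : Matrix (Fin n) (Fin n ⊕ Fin n) ℝ)
    (M : Matrix (Fin n) (Fin n) ℝ) : ℝ :=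
  -∑ i, ∑ j, pairS P Q M i j * Real.logb 2 |pairS P Q M i j|

/-- Planar rotation matrix `R_{i,i',θ}`. -/
def rotMat {n : ℕ} (i i' : Fin n) (θ : ℝ) : Matrix (Fin n) (Fin n) ℝ :=
  Matrix.of fun a b =>
    if a = i ∧ b = i then Real.cos θ
    else if a = i ∧ b = i' then Real.sin θ
    else if a = i' ∧ b = i then -Real.sin θ
    else if a = i' ∧ b = i' then Real.cos θ
    else if a = b then 1 else 0

/-- Spectral norm (ℓ₂ operator norm) of a square real matrix. -/
def specNorm {n : ℕ} (M : Matrix (Fin n) (Fin n) ℝ) : ℝ :=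
  ‖LinearMap.toContinuousLinearMap (Matrix.toEuclideanLin M)‖

/-- Condition number `κ(M) = ‖M‖₂ ‖M⁻¹‖₂`. -/
def condNum {n : ℕ} (M : Matrix (Fin n) (Fin n) ℝ) : ℝ :=
  specNorm M * specNorm M⁻¹

/-- Singular values: square roots of eigenvalues of `Mᴴ M` (= `Mᵀ M` over ℝ). -/
def singVals {n : ℕ} (M : Matrix (Fin n) (Fin n) ℝ) (i : Fin n) : ℝ :=
  Real.sqrt ((Matrix.isHermitian_conjTranspose_mul_self M).eigenvalues i)

/-- Rotation step of the linear algebraic model. -/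
def IsRotStep {n : ℕ} (M M' : Matrix (Fin n) (Fin n) ℝ) : Prop :=
  ∃ (i i' : Fin n) (θ : ℝ), i < i' ∧ M' = rotMat i i' θ * M

/-- Constant gate: one row is multiplied by a nonzero constant. -/
def IsConstGate {n : ℕ} (M M' : Matrix (Fin n) (Fin n) ℝ) : Prop :=
  ∃ (r : Fin n) (c : ℝ), c ≠ 0 ∧ M' = Matrix.updateRow M r (c • M r)

/-- A single step of a linear algebraic algorithm. -/
def IsStep {n : ℕ} (M M' : Matrix (Fin n) (Fin n) ℝ) : Prop :=
  IsRotStep M M' ∨ IsConstGate M M'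

/-- `A` is an `m`-step linear algebraic algorithm. -/
def IsAlgorithm {n : ℕ} (m : ℕ) (A : ℕ → Matrix (Fin n) (Fin n) ℝ) : Prop :=
  A 0 = 1 ∧ ∀ t < m, IsStep (A t) (A (t+1))

/-- The algorithm is uniformly `κ`-well conditioned. -/
def WellConditioned {n : ℕ} (m : ℕ) (A : ℕ → Matrix (Fin n) (Fin n) ℝ) (κ : ℝ) : Prop :=
  ∀ t ≤ m, IsUnit (A t).det ∧ condNum (A t) ≤ κ

end

/-
Writing `⟨i, j⟩` for the mod-2 inner product of binary expansions, the rows of `(-1)^⟨i, j⟩` are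
orthogonal: peeling off the lowest bit of the summation index `l` splits the sum over `l < 2^(k+1)`
into two sums over `l < 2^k` whose weights `1 + (-1)^(i₀ + j₀)` vanish unless `i` and `j` share
their lowest bit. Hence `F` is orthogonal and `F⁻ᵀ = F`, so every product `F(i,j) F⁻ᵀ(i,j)` equals
`F(i,j)² = 1/n`, and the `n²` terms of `Φ(F)` each contribute `-(1/n) log₂ (1/n)`.
-/

def bitInner (k i j : ℕ) : ℕ := ∑ b ∈ range k, ((i >>> b) % 2) * ((j >>> b) % 2)

lemma bitInner_succ (k i j : ℕ) :
    bitInner (k + 1) i j = (i % 2) * (j % 2) + bitInner k (i / 2) (j / 2) := by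
  unfold bitInner
  rw [sum_range_succ', add_comm]
  simp only [Nat.shiftRight_eq_div_pow, pow_zero, Nat.div_one, pow_succ', Nat.div_div_eq_div_mul]

lemma sum_range_two_mul {M : Type*} [AddCommMonoid M] (N : ℕ) (g : ℕ → M) :
    ∑ l ∈ range (2 * N), g l = ∑ q ∈ range N, (g (2 * q) + g (2 * q + 1)) := by
  induction N with
  | zero => simp
  | succ N ih => rw [Nat.mul_succ, sum_range_succ, sum_range_succ, sum_range_succ, ih, add_assoc]

lemma one_add_neg_one_pow_mod_two (a b : ℕ) :
    1 + (-1 : ℝ) ^ (a % 2 + b % 2) = if a % 2 = b % 2 then 2 else 0 := by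
  rcases Nat.mod_two_eq_zero_or_one a with ha | ha <;>
    rcases Nat.mod_two_eq_zero_or_one b with hb | hb <;> norm_num [ha, hb]

theorem sum_neg_one_pow_bitInner_mul (k : ℕ) {i j : ℕ} (hi : i < 2 ^ k) (hj : j < 2 ^ k) :
    ∑ l ∈ range (2 ^ k), (-1 : ℝ) ^ bitInner k i l * (-1) ^ bitInner k j l
      = if i = j then (2 ^ k : ℝ) else 0 := by
  induction k generalizing i j with
  | zero =>
    obtain rfl : i = 0 := by omega
    obtain rfl : j = 0 := by omega
    simp [bitInner]
  | succ k ih =>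
    have hpair : ∀ q, (-1 : ℝ) ^ bitInner (k + 1) i (2 * q) * (-1) ^ bitInner (k + 1) j (2 * q)
        + (-1) ^ bitInner (k + 1) i (2 * q + 1) * (-1) ^ bitInner (k + 1) j (2 * q + 1)
        = (1 + (-1) ^ (i % 2 + j % 2)) *
            ((-1) ^ bitInner k (i / 2) q * (-1) ^ bitInner k (j / 2) q) := by
      intro q
      simp only [bitInner_succ, Nat.mul_mod_right, Nat.mul_add_mod_self_left,
        Nat.mul_add_div two_pos, Nat.mul_div_cancel_left _ two_pos]
      norm_num [pow_add]
      ring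
    have hbits : i = j ↔ i % 2 = j % 2 ∧ i / 2 = j / 2 := by omega
    rw [pow_succ', sum_range_two_mul, sum_congr rfl fun q _ => hpair q, ← mul_sum,
      ih (by omega) (by omega), one_add_neg_one_pow_mod_two, ite_mul, zero_mul, mul_ite,
      mul_zero, ← ite_and]
    exact if_congr hbits.symm (pow_succ' 2 k).symm rfl

lemma qent_eq_of_mul_transpose_eq_one {n : ℕ} {M : Matrix (Fin n) (Fin n) ℝ} (hM : M * Mᵀ = 1)
    (hflat : ∀ i j, M i j * M i j = (n : ℝ)⁻¹) :
    qent M = n * Real.logb 2 n := by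
  have hinvT : M⁻¹ᵀ = M := by rw [inv_eq_right_inv hM, transpose_transpose]
  rcases eq_or_ne n 0 with rfl | hn
  · simp [qent]
  simp only [qent, hinvT, hflat, abs_inv, Nat.abs_cast, Real.logb_inv, sum_const, card_univ,
    Fintype.card_fin, nsmul_eq_mul]
  field_simp

lemma WH_apply (k : ℕ) (i j : Fin (2 ^ k)) :
    WH k i j = (-1 : ℝ) ^ bitInner k i j / Real.sqrt (2 ^ k) := rfl

lemma WH_mul_self_apply (k : ℕ) (i j : Fin (2 ^ k)) : WH k i j * WH k i j = ((2 : ℝ) ^ k)⁻¹ := by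
  rw [WH_apply, div_mul_div_comm, ← pow_add, Even.neg_one_pow ⟨_, rfl⟩,
    Real.mul_self_sqrt (by positivity), one_div]

lemma WH_mul_transpose (k : ℕ) : WH k * (WH k)ᵀ = 1 := by
  ext i j
  have hsqrt : Real.sqrt (2 ^ k) * Real.sqrt (2 ^ k) = (2 ^ k : ℝ) :=
    Real.mul_self_sqrt (by positivity)
  simp only [mul_apply, transpose_apply, WH_apply, div_mul_div_comm, hsqrt, ← sum_div]
  rw [Fin.sum_univ_eq_sum_range (fun l => (-1 : ℝ) ^ bitInner k i l * (-1) ^ bitInner k j l),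
    sum_neg_one_pow_bitInner_mul k i.isLt j.isLt, one_apply]
  simp only [Fin.val_inj]
  split_ifs <;> simp

theorem qent_walsh_hadamard_general (k : ℕ) :
    qent (WH k) = (2^k : ℝ) * Real.logb 2 (2^k) := by
  have hflat : ∀ i j, WH k i j * WH k i j = ((2 ^ k : ℕ) : ℝ)⁻¹ := by
    exact_mod_cast WH_mul_self_apply k
  exact_mod_cast qent_eq_of_mul_transpose_eq_one (WH_mul_transpose k) hflat

/-- the quasi-entropy of the Walsh–Hadamard matrix is `n log₂ n`. -/
theorem qent_walsh_hadamard (k : ℕ) (hk : 1 ≤ k) :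
    qent (WH k) = (2^k : ℝ) * Real.logb 2 (2^k) :=
  qent_walsh_hadamard_general k
end

section
/- There exist constants α ∈ (0, 1/2), c > 0 and n₀ such that for every n = 2^k ≥ n₀ and every ε with n^{−α} ≤ ε ≤ α, the (Id, F)-preconditioned quasi-entropy of the Fourier ε-perturbation satisfies Φ_{Id,F}(Id + εF) ≥ c ε n log₂ n, where F is the n×n Walsh–Hadamard matrix. -/
open Matrix Finset

/-!
Since `F` is a symmetric involution, `(Id + εF)⁻ᵀ F = (1 - ε²)⁻¹ (F - ε Id)`. Hence the entrywise
product of `Id + εF` and `(Id + εF)⁻ᵀ F` equals `ε / ((1 - ε²) n) ≤ 1/n` off the diagonal, while on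
the diagonal it has size at most `3ε`, because `|F i i| = n^{-1/2} ≤ ε`. The `n(n-1)` off-diagonal
terms thus contribute at least `ε (n-1) log₂ n`. Since `t ↦ t log(1/t)` increases on `[0, 1/e]`, the
`n` diagonal terms contribute at least `-3εn log₂(1/(3ε)) ≥ -(3/10) ε n log₂ n` when `ε ≥ n^{-1/10}`.
So `α = c = 1/10` and `n₀ = 2` work.
-/

open Real

lemma negMulLog_le_negMulLog {t u : ℝ} (ht : 0 ≤ t) (htu : t ≤ u) (hu : u ≤ exp (-1)) :
    negMulLog t ≤ negMulLog u := by
  have hu1 : u ≤ 1 := hu.trans (exp_le_one_iff.2 (by norm_num))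
  rcases ht.eq_or_lt with rfl | ht
  · simpa using negMulLog_nonneg (ht.trans htu) hu1
  have hu0 : 0 < u := ht.trans_le htu
  have hlog_u : 1 ≤ -log u := by
    rw [le_neg, ← log_exp (-1)]
    exact log_le_log hu0 hu
  have hlog_ut : t * log (u / t) ≤ u - t := by
    have := mul_le_mul_of_nonneg_left (log_le_sub_one_of_pos (div_pos hu0 ht)) ht.le
    rwa [mul_sub, mul_div_cancel₀ _ ht.ne', mul_one] at this
  rw [log_div hu0.ne' ht.ne'] at hlog_ut
  simp only [negMulLog]
  nlinarith [mul_nonneg (sub_nonneg.2 htu) (sub_nonneg.2 hlog_u)]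

lemma mul_logb_le_neg_mul_logb_abs {x u : ℝ} (hxu : |x| ≤ u) (hu : u ≤ exp (-1)) :
    u * logb 2 u ≤ -(x * logb 2 |x|) := by
  have hlog : logb 2 |x| ≤ 0 :=
    logb_nonpos one_lt_two (abs_nonneg x) (hxu.trans (hu.trans (exp_le_one_iff.2 (by norm_num))))
  have h_abs : |x| * logb 2 |x| ≤ -(x * logb 2 |x|) := by
    nlinarith [mul_le_mul_of_nonpos_right (neg_abs_le x) hlog]
  have h_negMulLog (y : ℝ) : y * logb 2 y = -negMulLog y / log 2 := by
    simp only [negMulLog, logb]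
    ring
  refine le_trans ?_ h_abs
  rw [h_negMulLog, h_negMulLog]
  exact div_le_div_of_nonneg_right
    (neg_le_neg (negMulLog_le_negMulLog (abs_nonneg x) hxu hu)) (log_pos one_lt_two).le

lemma mul_le_neg_mul_logb_of_le_inv_two_pow {q : ℝ} {k : ℕ} (hq : 0 < q) (hqk : q ≤ (2 ^ k)⁻¹) :
    q * k ≤ -(q * logb 2 |q|) := by
  rw [abs_of_pos hq, ← mul_neg]
  gcongr
  rw [le_neg]
  calc logb 2 q ≤ logb 2 (2 ^ k)⁻¹ := logb_le_logb_of_le one_lt_two hq hqk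
    _ = -k := by rw [logb_inv, logb_pow, logb_self_eq_one one_lt_two, mul_one]

lemma le_sum_sum_of_offDiag_of_diag {ι : Type*} [Fintype ι] [DecidableEq ι] {f : ι → ι → ℝ}
    {a d : ℝ} (hoff : ∀ i j, i ≠ j → a ≤ f i j) (hdiag : ∀ i, d ≤ f i i) :
    Fintype.card ι * (d + (Fintype.card ι - 1) * a) ≤ ∑ i, ∑ j, f i j := by
  have hrow (i : ι) : d + (Fintype.card ι - 1) * a ≤ ∑ j, f i j := by
    rw [← Finset.add_sum_erase _ _ (Finset.mem_univ i)]
    gcongr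
    · exact hdiag i
    · calc (Fintype.card ι - 1 : ℝ) * a = ∑ _j ∈ univ.erase i, a := by
            rw [Finset.sum_const, Finset.card_erase_of_mem (Finset.mem_univ i), Finset.card_univ,
              nsmul_eq_mul, Nat.cast_pred (Fintype.card_pos_iff.2 ⟨i⟩)]
        _ ≤ ∑ j ∈ univ.erase i, f i j :=
            Finset.sum_le_sum fun j hj => hoff i j (Finset.ne_of_mem_erase hj).symm
  simpa only [Finset.sum_const, Finset.card_univ, nsmul_eq_mul] using
    Finset.sum_le_sum fun i (_ : i ∈ univ) => hrow i

section Involution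

variable {ι : Type*} [Fintype ι] [DecidableEq ι] {F : Matrix ι ι ℝ} {ε : ℝ}

lemma inv_one_add_smul_of_mul_self_eq_one (hF : F * F = 1) (hε : ε ^ 2 ≠ 1) :
    (1 + ε • F)⁻¹ = (1 - ε ^ 2)⁻¹ • (1 - ε • F) := by
  apply inv_eq_right_inv
  have : (1 + ε • F) * (1 - ε • F) = (1 - ε ^ 2) • (1 : Matrix ι ι ℝ) := by
    simp only [mul_sub, add_mul, one_mul, mul_one, smul_mul_smul, hF, sq, sub_smul, one_smul]
    abel
  rw [Matrix.mul_smul, this, smul_smul, inv_mul_cancel₀ (sub_ne_zero.2 hε.symm), one_smul]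

lemma one_add_smul_mul_inv_transpose_mul_apply (hF : F * F = 1) (hFT : Fᵀ = F) (hε : ε ^ 2 ≠ 1)
    (i j : ι) :
    ((1 + ε • F) * 1 : Matrix ι ι ℝ) i j * ((1 + ε • F)⁻¹ᵀ * F : Matrix ι ι ℝ) i j =
      (1 - ε ^ 2)⁻¹ *
        (((1 : Matrix ι ι ℝ) i j + ε * F i j) * (F i j - ε * (1 : Matrix ι ι ℝ) i j)) := by
  rw [inv_one_add_smul_of_mul_self_eq_one hF hε, transpose_smul, transpose_sub, transpose_one,
    transpose_smul, hFT, smul_mul, sub_mul, one_mul, smul_mul, hF, mul_one]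
  simp only [Matrix.add_apply, Matrix.sub_apply, Matrix.smul_apply, smul_eq_mul]
  ring

end Involution

lemma shiftRight_mod_two_finFunctionFinEquiv {k : ℕ} (v : Fin k → Fin 2) (b : Fin k) :
    ((finFunctionFinEquiv v : ℕ) >>> (b : ℕ)) % 2 = v b := by
  rw [Nat.shiftRight_eq_div_pow, ← finFunctionFinEquiv_symm_apply_val, Equiv.symm_apply_apply]

lemma WH_finFunctionFinEquiv {k : ℕ} (v w : Fin k → Fin 2) :
    WH k (finFunctionFinEquiv v) (finFunctionFinEquiv w) =
      (∏ b, (-1 : ℝ) ^ ((v b : ℕ) * w b)) / √(2 ^ k) := by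
  simp only [WH, Finset.prod_pow_eq_pow_sum, Finset.sum_range,
    shiftRight_mod_two_finFunctionFinEquiv]

lemma sum_neg_one_pow_mul_neg_one_pow (a c : Fin 2) :
    ∑ x : Fin 2, (-1 : ℝ) ^ ((a : ℕ) * x) * (-1) ^ ((x : ℕ) * c) = if a = c then 2 else 0 := by
  fin_cases a <;> fin_cases c <;> norm_num [Fin.sum_univ_two]

lemma WH_transpose (k : ℕ) : (WH k)ᵀ = WH k := by
  ext i j
  simp only [transpose_apply, WH, Nat.mul_comm]

-- Indexing rows by bit vectors, each entry of `WH k * WH k` factors as a product over the bits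
-- of two-term sums.
lemma WH_mul_self (k : ℕ) : WH k * WH k = 1 := by
  ext i i'
  obtain ⟨v, rfl⟩ := finFunctionFinEquiv.surjective i
  obtain ⟨w, rfl⟩ := finFunctionFinEquiv.surjective i'
  rw [mul_apply, ← finFunctionFinEquiv.sum_comp]
  simp only [WH_finFunctionFinEquiv, div_mul_div_comm, ← Finset.sum_div, ← Finset.prod_mul_distrib,
    mul_self_sqrt (by positivity : (0 : ℝ) ≤ 2 ^ k)]
  rw [← Fintype.prod_sum (fun b (x : Fin 2) => (-1 : ℝ) ^ ((v b : ℕ) * x) * (-1) ^ ((x : ℕ) * w b))]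
  simp only [sum_neg_one_pow_mul_neg_one_pow, Fintype.prod_ite_zero, Finset.prod_const,
    Finset.card_univ, Fintype.card_fin, one_apply, finFunctionFinEquiv.injective.eq_iff, funext_iff]
  split_ifs <;> simp

lemma sq_WH_apply (k : ℕ) (i j : Fin (2 ^ k)) : WH k i j ^ 2 = (2 ^ k : ℝ)⁻¹ := by
  rw [WH, div_pow, ← pow_mul, pow_mul', neg_one_sq, one_pow, sq_sqrt (by positivity), one_div]

lemma abs_WH_apply (k : ℕ) (i j : Fin (2 ^ k)) : |WH k i j| = (√(2 ^ k))⁻¹ := by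
  rw [← sqrt_sq_eq_abs, sq_WH_apply, sqrt_inv]

lemma abs_inv_one_sub_sq_mul_le {a ε : ℝ} (hε0 : 0 < ε) (hε : ε ≤ 1 / 10) (ha : |a| ≤ ε) :
    |(1 - ε ^ 2)⁻¹ * ((1 + ε * a) * (a - ε))| ≤ 3 * ε := by
  have hε2 : 0 < 1 - ε ^ 2 := by nlinarith
  obtain ⟨hlo, hhi⟩ := abs_le.1 ha
  have hlo' : 0 ≤ a + ε := by linarith
  rw [abs_mul, abs_inv, abs_of_pos hε2, inv_mul_le_iff₀ hε2, abs_le]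
  constructor <;> nlinarith [mul_nonneg hε0.le (mul_nonneg (sub_nonneg.2 hhi) hlo'),
    mul_nonneg (sq_nonneg ε) (sub_nonneg.2 hhi), mul_nonneg (sq_nonneg ε) hlo',
    mul_nonneg hε0.le (sq_nonneg a)]

lemma qentP_WH_perturbation_ge {k : ℕ} {ε : ℝ} (hε0 : 0 < ε) (hε : ε ≤ 1 / 10)
    (hWH : (√(2 ^ k))⁻¹ ≤ ε) :
    2 ^ k * (3 * ε * logb 2 (3 * ε)) + (2 ^ k - 1) * ε * k ≤ qentP 1 (WH k) (1 + ε • WH k) := by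
  have hε2 : 0 < 1 - ε ^ 2 := by nlinarith
  have hentry := one_add_smul_mul_inv_transpose_mul_apply (WH_mul_self k) (WH_transpose k)
    (ε := ε) (by nlinarith)
  simp only [qentP, hentry, ← Finset.sum_neg_distrib]
  refine le_of_eq_of_le ?_ (le_sum_sum_of_offDiag_of_diag (a := ε * k / 2 ^ k)
    (d := 3 * ε * logb 2 (3 * ε)) ?_ ?_)
  · simp only [Fintype.card_fin, Nat.cast_pow, Nat.cast_ofNat]
    field_simp
  · intro i j hij
    have hq : (1 - ε ^ 2)⁻¹ * ((0 + ε * WH k i j) * (WH k i j - ε * 0)) =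
        ε / (1 - ε ^ 2) * (2 ^ k)⁻¹ := by
      rw [← sq_WH_apply k i j]
      ring
    rw [one_apply_ne hij, hq]
    calc ε * k / 2 ^ k ≤ ε / (1 - ε ^ 2) * (2 ^ k)⁻¹ * k := by
          rw [div_eq_mul_inv, mul_right_comm]
          gcongr
          exact le_div_self hε0.le hε2 (by nlinarith)
      _ ≤ _ := mul_le_neg_mul_logb_of_le_inv_two_pow (by positivity) <|
          mul_le_of_le_one_left (by positivity) ((div_le_one hε2).2 (by nlinarith))
  · intro i
    rw [one_apply_eq, mul_one]
    exact mul_logb_le_neg_mul_logb_abs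
      (abs_inv_one_sub_sq_mul_le hε0 hε (abs_WH_apply k i i ▸ hWH))
      (by linarith [exp_neg_one_gt_d9])

/-- `Φ_{Id,F}(Id + εF) ≥ c ε n log₂ n` for `n^{-α} ≤ ε ≤ α`. -/
theorem qentP_perturbation_lower :
    ∃ α ∈ Set.Ioo (0:ℝ) (1/2), ∃ c > (0:ℝ), ∃ n₀ : ℕ,
      ∀ k : ℕ, n₀ ≤ 2^k → ∀ ε : ℝ, ((2^k : ℝ)) ^ (-α) ≤ ε → ε ≤ α →
        c * ε * 2^k * Real.logb 2 (2^k) ≤ qentP 1 (WH k) (1 + ε • WH k) := by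
  refine ⟨1 / 10, ⟨by norm_num, by norm_num⟩, 1 / 10, by norm_num, 2, fun k hk ε hεlo hεhi => ?_⟩
  have hN : (2 : ℝ) ≤ 2 ^ k := by exact_mod_cast hk
  have hε0 : 0 < ε := (rpow_pos_of_pos (by positivity) _).trans_le hεlo
  have hWH : (√(2 ^ k))⁻¹ ≤ ε := calc
    (√(2 ^ k))⁻¹ = ((2 : ℝ) ^ k) ^ (-(1 / 2 : ℝ)) := by rw [sqrt_eq_rpow, rpow_neg (by positivity)]
    _ ≤ ((2 : ℝ) ^ k) ^ (-(1 / 10 : ℝ)) := rpow_le_rpow_of_exponent_le (by linarith) (by norm_num)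
    _ ≤ ε := hεlo
  have hlog : -(k / 10 : ℝ) ≤ logb 2 (3 * ε) := calc
    -(k / 10 : ℝ) = logb 2 (((2 : ℝ) ^ k) ^ (-(1 / 10 : ℝ))) := by
      rw [logb_rpow_eq_mul_logb_of_pos (by positivity), logb_pow, logb_self_eq_one one_lt_two]
      ring
    _ ≤ logb 2 (3 * ε) := logb_le_logb_of_le one_lt_two (by positivity) (by linarith)
  refine le_trans ?_ (qentP_WH_perturbation_ge hε0 hεhi hWH)
  rw [logb_pow, logb_self_eq_one one_lt_two, mul_one]
  have hdiag : 0 ≤ ε * 2 ^ k * (logb 2 (3 * ε) + k / 10) :=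
    mul_nonneg (by positivity) (by linarith)
  nlinarith [mul_nonneg (mul_nonneg hε0.le (Nat.cast_nonneg k))
    (by linarith : (0 : ℝ) ≤ 3 * 2 ^ k - 5)]
end

section
/- There exist constants C ∈ (0,1), c > 0, K > 0 and a positive integer ℓ₀ such that the following holds for every integer ℓ ≥ ℓ₀. Let x ∈ ℝ^ℓ satisfy x_i ≥ 0 for all i, 0 < ‖x‖₁ ≤ 1, and x_i ≤ 4‖x‖₁/ℓ for all i, and let y ∈ ℝ^ℓ satisfy ‖y‖₁ ≤ C‖x‖₁. Then −∑_{i=1}^ℓ (x_i + y_i) log₂|x_i + y_i| ≥ c ‖x‖₁ log₂(ℓ/‖x‖₁) − K, where the convention 0·log₂ 0 = 0 is used. -/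
open Matrix Finset

/-!
Write `z_i = x_i + y_i` and `h(z) = -z log |z|`. On the coordinates with `|y_i| ≤ x_i / 2` we have
`x_i / 2 ≤ z_i ≤ 6‖x‖₁/ℓ`, so `h(z_i) ≥ (x_i / 2) log (ℓ / (6‖x‖₁))`; since `‖y‖₁ ≤ ‖x‖₁ / 16`,
these coordinates carry most of the mass of `x`. On the other coordinates `h(z_i)` is negative only
when `z_i < 0`, and then `|z_i| ≤ |y_i|`; the bound `t log t ≥ t log a - a` with `a = ℓ⁻²` limits the
total loss there to `2 ‖y‖₁ log ℓ + 1/ℓ`, which is at most `(‖x‖₁/8) log (ℓ/‖x‖₁) + 1`.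
-/

namespace Real

lemma mul_log_sub_le_mul_log {a t : ℝ} (ha : 0 < a) (ht : 0 ≤ t) :
    t * log a - a ≤ t * log t := by
  rcases ht.eq_or_lt with rfl | ht
  · simpa using ha.le
  · have h := one_sub_inv_le_log_of_pos (div_pos ht ha)
    rw [log_div ht.ne' ha.ne', inv_div, sub_le_iff_le_add] at h
    have h' := mul_le_mul_of_nonneg_left h ht.le
    rw [mul_add, mul_div_cancel₀ _ ht.ne'] at h'
    linarith

lemma mul_log_inv_le_negMulLog {z b : ℝ} (hz : 0 ≤ z) (hzb : z ≤ b) :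
    z * log b⁻¹ ≤ negMulLog z := by
  rcases hz.eq_or_lt with rfl | hz
  · simp
  · rw [negMulLog, log_inv]
    nlinarith [log_le_log hz hzb]

lemma abs_mul_log_sub_le_negMulLog_add {x y a : ℝ} (hx : 0 ≤ x) (hxy : x + y ≤ 1)
    (ha₀ : 0 < a) (ha₁ : a ≤ 1) : |y| * log a - a ≤ negMulLog (x + y) := by
  have hloga : log a ≤ 0 := log_nonpos ha₀.le ha₁
  rcases le_or_gt 0 (x + y) with hz | hz
  · nlinarith [negMulLog_nonneg hz hxy, abs_nonneg y]
  · have ht : -(x + y) ≤ |y| := by linarith [neg_abs_le y]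
    calc |y| * log a - a ≤ -(x + y) * log a - a := by nlinarith
      _ ≤ -(x + y) * log (-(x + y)) := mul_log_sub_le_mul_log ha₀ (by linarith)
      _ = negMulLog (x + y) := by rw [negMulLog, log_neg_eq_log]

lemma le_negMulLog_add {x y a b : ℝ} (hx : 0 ≤ x) (hxb : 3 / 2 * x ≤ b) (hb : b ≤ 1)
    (hxy : x + y ≤ 1) (ha₀ : 0 < a) (ha₁ : a ≤ 1) :
    (x / 2 - |y|) * log b⁻¹ + |y| * log a - a ≤ negMulLog (x + y) := by
  have hlogb : 0 ≤ log b⁻¹ := by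
    rw [log_inv, neg_nonneg]
    exact log_nonpos (by linarith) hb
  have hloga : log a ≤ 0 := log_nonpos ha₀.le ha₁
  by_cases hy : |y| ≤ x / 2
  · have hz : x / 2 ≤ x + y := by linarith [neg_abs_le y]
    have hzb : x + y ≤ b := by linarith [le_abs_self y]
    nlinarith [mul_log_inv_le_negMulLog (by linarith) hzb, abs_nonneg y]
  · nlinarith [abs_mul_log_sub_le_negMulLog_add hx hxy ha₀ ha₁]

lemma le_sum_negMulLog_add {ι : Type*} [Fintype ι] {x y : ι → ℝ} {a b : ℝ}
    (hx : ∀ i, 0 ≤ x i) (hxb : ∀ i, 3 / 2 * x i ≤ b) (hb : b ≤ 1) (hxy : ∀ i, x i + y i ≤ 1)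
    (ha₀ : 0 < a) (ha₁ : a ≤ 1) :
    ((∑ i, x i) / 2 - ∑ i, |y i|) * log b⁻¹ + (∑ i, |y i|) * log a - Fintype.card ι * a ≤
      ∑ i, negMulLog (x i + y i) := by
  calc _ = ∑ i, ((x i / 2 - |y i|) * log b⁻¹ + |y i| * log a - a) := by
        simp only [sum_sub_distrib, sum_add_distrib, ← sum_mul, sum_div, sum_const, card_univ,
          nsmul_eq_mul]
    _ ≤ _ := sum_le_sum fun i _ => le_negMulLog_add (hx i) (hxb i) hb (hxy i) ha₀ ha₁

theorem le_sum_negMulLog_add_of_spread {ℓ : ℕ} (hℓ : 6 ≤ ℓ) {x y : Fin ℓ → ℝ}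
    (hx : ∀ i, 0 ≤ x i) (hs₀ : 0 < ∑ i, x i) (hs₁ : ∑ i, x i ≤ 1)
    (hspread : ∀ i, x i ≤ 4 * (∑ i, x i) / ℓ) (hy : ∑ i, |y i| ≤ (∑ i, x i) / 16) :
    5 / 16 * (∑ i, x i) * log (ℓ / ∑ i, x i) - (log 6 + 1) ≤ ∑ i, negMulLog (x i + y i) := by
  set s := ∑ i, x i
  have hℓ' : (6 : ℝ) ≤ ℓ := by exact_mod_cast hℓ
  have hℓ₀ : (0 : ℝ) < ℓ := by linarith
  have hyi : ∀ i, |y i| ≤ s / 16 := fun i =>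
    (single_le_sum (fun j _ => abs_nonneg (y j)) (mem_univ i)).trans hy
  have hb : 6 * s / ℓ ≤ 1 := by rw [div_le_one hℓ₀]; linarith
  have hxb : ∀ i, 3 / 2 * x i ≤ 6 * s / ℓ := fun i => by
    have := hspread i; rw [mul_div_assoc] at this ⊢; linarith
  have hxy : ∀ i, x i + y i ≤ 1 := fun i => by
    linarith [hxb i, hyi i, le_abs_self (y i)]
  have ha₀ : (0 : ℝ) < ((ℓ : ℝ) ^ 2)⁻¹ := by positivity
  have ha₁ : ((ℓ : ℝ) ^ 2)⁻¹ ≤ 1 := inv_le_one_of_one_le₀ (by nlinarith)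
  have key := le_sum_negMulLog_add hx hxb hb hxy ha₀ ha₁
  have hlogb : log (6 * s / ℓ)⁻¹ = log (ℓ / s) - log 6 := by
    rw [inv_div, log_div (by positivity) (by positivity), log_div (by positivity) hs₀.ne',
      log_mul (by norm_num) hs₀.ne']
    ring
  have hloga : log ((ℓ : ℝ) ^ 2)⁻¹ = -2 * log ℓ := by rw [log_inv, log_pow]; push_cast; ring
  have hcard : (Fintype.card (Fin ℓ) : ℝ) * ((ℓ : ℝ) ^ 2)⁻¹ ≤ 1 := by
    rw [Fintype.card_fin, sq, mul_inv, ← mul_assoc, mul_inv_cancel₀ hℓ₀.ne', one_mul]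
    exact inv_le_one_of_one_le₀ (by linarith)
  rw [hlogb, hloga] at key
  have hB : 0 ≤ log (ℓ / s) - log 6 := by
    rw [← hlogb, log_inv, neg_nonneg]; exact log_nonpos (by positivity) hb
  have hlogℓ : 0 ≤ log (ℓ : ℝ) := log_nonneg (by linarith)
  have hlogℓs : log (ℓ : ℝ) ≤ log (ℓ / s) :=
    log_le_log hℓ₀ (le_div_self hℓ₀.le hs₀ hs₁)
  have hlog6 : 0 ≤ log (6 : ℝ) := log_nonneg (by norm_num)
  -- `s/2 - ‖y‖₁ ≥ 7s/16` and `2 ‖y‖₁ log ℓ ≤ (s/8) log (ℓ/s)`, whence `7/16 - 1/8 = 5/16`.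
  nlinarith [mul_nonneg (sub_nonneg.2 hy) hB, mul_nonneg (sub_nonneg.2 hy) hlogℓ,
    mul_nonneg hs₀.le (sub_nonneg.2 hlogℓs), mul_nonneg (sub_nonneg.2 hs₁) hlog6]

lemma neg_mul_logb_abs (b z : ℝ) : -(z * logb b |z|) = negMulLog z / log b := by
  rw [logb, log_abs, negMulLog]; ring

end Real

open Real in
/-- entropy-with-noise lemma. -/
theorem entropy_with_noise :
    ∃ C ∈ Set.Ioo (0:ℝ) 1, ∃ c > (0:ℝ), ∃ K > (0:ℝ), ∃ ℓ₀ : ℕ, 0 < ℓ₀ ∧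
      ∀ ℓ : ℕ, ℓ₀ ≤ ℓ → ∀ x y : Fin ℓ → ℝ,
        (∀ i, 0 ≤ x i) → 0 < ∑ i, |x i| → ∑ i, |x i| ≤ 1 →
        (∀ i, x i ≤ 4 * (∑ i, |x i|) / ℓ) →
        (∑ i, |y i|) ≤ C * ∑ i, |x i| →
        c * (∑ i, |x i|) * Real.logb 2 (ℓ / ∑ i, |x i|) - K ≤
          -∑ i, (x i + y i) * Real.logb 2 |x i + y i| := by
  refine ⟨1 / 16, by norm_num, 5 / 16, by norm_num, (log 6 + 1) / log 2, by positivity, 6,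
    by norm_num, fun ℓ hℓ x y hx hs₀ hs₁ hspread hy => ?_⟩
  have habs : ∑ i, |x i| = ∑ i, x i := sum_congr rfl fun i _ => abs_of_nonneg (hx i)
  rw [habs] at hs₀ hs₁ hspread hy ⊢
  have hln := le_sum_negMulLog_add_of_spread hℓ hx hs₀ hs₁ hspread (y := y) (by linarith)
  rw [← sum_neg_distrib]
  simp only [neg_mul_logb_abs, ← sum_div]
  calc _ = (5 / 16 * (∑ i, x i) * log (ℓ / ∑ i, x i) - (log 6 + 1)) / log 2 := by
        rw [logb]; ring
    _ ≤ _ := div_le_div_of_nonneg_right hln (log_pos one_lt_two).le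
end
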